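/- If (X,d) is a complete and locally compact metric space, then d_0 = d̄ (the chain metric coincides with the induced length metric), and moreover (X,d_0) is a geodesic space: for all p,q with d_0(p,q) < ∞ there is a path γ: [0,1] → X from p to q with d(γ(t),γ(t')) ≤ d_0(p,q)·|t−t'| and L(γ) = d_0(p,q). -/

import Mathlib

open Filter Set
open scoped ENNReal

/-!
For `ε > 0` the chain distance `d_ε(p, ·)` is lower semicontinuous, so the chain balls
`{x | d_ε(p, x) ≤ r}` are closed. Completeness and local compactness make each of them compact
once `ε` is small: the radii for which this holds form a down-closed set which, as soon as it
contains every radius below `R`, contains one above `R`. Indeed, truncating chains shows that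
balls with radii increasing to `R` lie in one compact set, and a compact set can be fattened by
a fixed amount.

Inside such a compact ball, `ε`-chains from `p` to `q` of length close to `d_0(p, q)`, run at
constant speed, converge pointwise along an ultrafilter as `ε → 0` to a `d_0(p, q)`-Lipschitz
path, whose length is therefore at most `d_0(p, q)`. Conversely, sampling a continuous path along
a fine uniform partition gives `ε`-chains no longer than the path, so `d_0 ≤ d̄`.
-/

variable {X : Type*}

/-- The length of the chain `x 0, x 1, …, x n` with respect to the distance `ρ`. -/
noncomputable def chainLengthOf (ρ : X → X → ℝ≥0∞) (x : ℕ → X) (n : ℕ) : ℝ≥0∞ :=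
  ∑ k ∈ Finset.range n, ρ (x k) (x (k + 1))

/-- `x 0, …, x n` is an `ε`-chain from `p` to `q` with respect to `ρ`. -/
def IsChainOf (ρ : X → X → ℝ≥0∞) (ε : ℝ≥0∞) (p q : X) (x : ℕ → X) (n : ℕ) : Prop :=
  x 0 = p ∧ x n = q ∧ ∀ k < n, ρ (x k) (x (k + 1)) ≤ ε

/-- `d_ε`: the infimum of lengths of `ε`-chains joining `p` to `q`. -/
noncomputable def chainDistOf (ρ : X → X → ℝ≥0∞) (ε : ℝ≥0∞) (p q : X) : ℝ≥0∞ :=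
  ⨅ (n : ℕ) (x : ℕ → X) (_ : IsChainOf ρ ε p q x n), chainLengthOf ρ x n

/-- `d_0 = sup_{ε > 0} d_ε`. -/
noncomputable def chainMetricOf (ρ : X → X → ℝ≥0∞) (p q : X) : ℝ≥0∞ :=
  ⨆ (ε : ℝ≥0∞) (_ : 0 < ε), chainDistOf ρ ε p q

/-- `d_ε` for a metric space, with `ρ = edist`. -/
noncomputable def chainDist [PseudoEMetricSpace X] (ε : ℝ≥0∞) (p q : X) : ℝ≥0∞ :=
  chainDistOf (fun a b => edist a b) ε p q

/-- `d_0` for a metric space, with `ρ = edist`. -/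
noncomputable def chainMetric [PseudoEMetricSpace X] (p q : X) : ℝ≥0∞ :=
  chainMetricOf (fun a b => edist a b) p q

/-- The length of a path `γ : [0,1] → X` with respect to `ρ`:
the supremum over partitions `0 = t 0 ≤ t 1 ≤ … ≤ t n = 1` of the partition sums. -/
noncomputable def pathLengthOf (ρ : X → X → ℝ≥0∞) (γ : ℝ → X) : ℝ≥0∞ :=
  ⨆ (n : ℕ) (t : ℕ → ℝ) (_ : t 0 = 0 ∧ t n = 1 ∧ Monotone t),
    ∑ k ∈ Finset.range n, ρ (γ (t k)) (γ (t (k + 1)))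

noncomputable def pathLength [PseudoEMetricSpace X] (γ : ℝ → X) : ℝ≥0∞ :=
  pathLengthOf (fun a b => edist a b) γ

/-- Continuity of a path `γ` on `[0,1]` with respect to the distance `ρ`. -/
def ContinuousWrt (ρ : X → X → ℝ≥0∞) (γ : ℝ → X) : Prop :=
  ∀ t ∈ Icc (0 : ℝ) 1,
    Tendsto (fun s => ρ (γ s) (γ t)) (nhdsWithin t (Icc (0 : ℝ) 1)) (nhds 0)

/-- The induced length metric with respect to `ρ`: the infimum of `ρ`-lengths of
`ρ`-continuous paths joining `p` to `q`. -/
noncomputable def lengthMetricOf (ρ : X → X → ℝ≥0∞) (p q : X) : ℝ≥0∞ :=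
  ⨅ (γ : ℝ → X) (_ : ContinuousWrt ρ γ ∧ γ 0 = p ∧ γ 1 = q), pathLengthOf ρ γ

/-- The induced length metric `d̄` of a metric space. -/
noncomputable def lengthMetric [PseudoEMetricSpace X] (p q : X) : ℝ≥0∞ :=
  lengthMetricOf (fun a b => edist a b) p q

section Chains

variable {ρ : X → X → ℝ≥0∞} {ε ε' r : ℝ≥0∞} {p q y z : X} {x : ℕ → X} {n : ℕ}

theorem chainLengthOf_zero : chainLengthOf ρ x 0 = 0 := Finset.sum_range_zero _

theorem chainLengthOf_succ :
    chainLengthOf ρ x (n + 1) = chainLengthOf ρ x n + ρ (x n) (x (n + 1)) :=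
  Finset.sum_range_succ _ _

theorem chainLengthOf_mono : Monotone (chainLengthOf ρ x) :=
  fun _ _ h => Finset.sum_le_sum_of_subset (Finset.range_subset_range.2 h)

theorem IsChainOf.mono (h : IsChainOf ρ ε p q x n) (hε : ε ≤ ε') : IsChainOf ρ ε' p q x n :=
  ⟨h.1, h.2.1, fun k hk => (h.2.2 k hk).trans hε⟩

theorem IsChainOf.take (h : IsChainOf ρ ε p q x n) {j : ℕ} (hj : j ≤ n) :
    IsChainOf ρ ε p (x j) x j :=
  ⟨h.1, rfl, fun k hk => h.2.2 k (hk.trans_le hj)⟩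

theorem IsChainOf.update (h : IsChainOf ρ ε p y x n) (hz : ρ y z ≤ ε) :
    IsChainOf ρ ε p z (Function.update x (n + 1) z) (n + 1) := by
  refine ⟨by simpa using h.1, by simp, fun k hk => ?_⟩
  rw [Function.update_of_ne (by omega)]
  rcases Nat.lt_succ_iff_lt_or_eq.1 hk with hk | rfl
  · rw [Function.update_of_ne (by omega)]
    exact h.2.2 k hk
  · simpa [h.2.1] using hz

theorem chainLengthOf_update (hy : x n = y) :
    chainLengthOf ρ (Function.update x (n + 1) z) (n + 1) = chainLengthOf ρ x n + ρ y z := by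
  rw [chainLengthOf_succ, Function.update_self, Function.update_of_ne (by omega), hy]
  congr 1
  refine Finset.sum_congr rfl fun k hk => ?_
  rw [Finset.mem_range] at hk
  rw [Function.update_of_ne (by omega), Function.update_of_ne (by omega)]

theorem IsChainOf.chainDistOf_le (h : IsChainOf ρ ε p q x n) :
    chainDistOf ρ ε p q ≤ chainLengthOf ρ x n :=
  iInf₂_le_of_le n x (iInf_le _ h)

theorem chainDistOf_anti (hε : ε ≤ ε') : chainDistOf ρ ε' p q ≤ chainDistOf ρ ε p q :=
  le_iInf₂ fun _ _ => le_iInf fun h => (h.mono hε).chainDistOf_le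

theorem exists_isChainOf_of_chainDistOf_lt (h : chainDistOf ρ ε p q < r) :
    ∃ n x, IsChainOf ρ ε p q x n ∧ chainLengthOf ρ x n < r := by
  simpa only [chainDistOf, iInf_lt_iff, exists_prop] using h

theorem chainDistOf_le_add (hz : ρ y z ≤ ε) :
    chainDistOf ρ ε p z ≤ chainDistOf ρ ε p y + ρ y z := by
  simp only [chainDistOf, ENNReal.iInf_add]
  exact le_iInf₂ fun n x => le_iInf fun h =>
    (chainLengthOf_update h.2.1 ▸ (h.update hz).chainDistOf_le :)

open Classical in
noncomputable def chainIndexAt (ρ : X → X → ℝ≥0∞) (x : ℕ → X) (n : ℕ) (r : ℝ≥0∞) : ℕ :=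
  Nat.findGreatest (fun j => chainLengthOf ρ x j ≤ r) n

theorem chainIndexAt_le : chainIndexAt ρ x n r ≤ n := Nat.findGreatest_le n

theorem chainLengthOf_chainIndexAt_le : chainLengthOf ρ x (chainIndexAt ρ x n r) ≤ r :=
  Nat.findGreatest_spec (P := fun j => chainLengthOf ρ x j ≤ r) n.zero_le
    (by simp only [chainLengthOf_zero, zero_le])

theorem chainIndexAt_mono : Monotone (chainIndexAt ρ x n) :=
  fun _ _ h => Nat.findGreatest_mono_left (fun _ hj => hj.trans h) n

theorem chainIndexAt_of_le (h : chainLengthOf ρ x n ≤ r) : chainIndexAt ρ x n r = n :=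
  Nat.findGreatest_eq h

theorem IsChainOf.le_chainLengthOf_chainIndexAt_add (h : IsChainOf ρ ε p q x n)
    (hr : r ≤ chainLengthOf ρ x n) :
    r ≤ chainLengthOf ρ x (chainIndexAt ρ x n r) + ε := by
  rcases chainIndexAt_le.eq_or_lt with heq | hlt
  · rw [heq]
    exact hr.trans le_self_add
  · have hnext : ¬ chainLengthOf ρ x (chainIndexAt ρ x n r + 1) ≤ r :=
      Nat.findGreatest_is_greatest (Nat.lt_succ_self _) hlt
    rw [chainLengthOf_succ, not_le] at hnext
    exact hnext.le.trans (by gcongr; exact h.2.2 _ hlt)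

end Chains

section EdistChains

variable [PseudoEMetricSpace X] {ε r s : ℝ≥0∞} {p q x : X} {c : ℕ → X} {n : ℕ}

theorem edist_add_chainLengthOf_le {j k : ℕ} (h : j ≤ k) :
    edist (c j) (c k) + chainLengthOf edist c j ≤ chainLengthOf edist c k := by
  rw [add_comm, chainLengthOf, chainLengthOf, ← Finset.sum_range_add_sum_Ico _ h]
  gcongr
  exact edist_le_Ico_sum_edist c h

theorem IsChainOf.edist_le_chainLengthOf (h : IsChainOf edist ε p q c n) :
    edist p q ≤ chainLengthOf edist c n := by
  simpa [← h.1, ← h.2.1, chainLengthOf_zero] using edist_add_chainLengthOf_le (c := c) n.zero_le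

theorem edist_le_chainDist : edist p q ≤ chainDist ε p q :=
  le_iInf₂ fun _ _ => le_iInf fun h => h.edist_le_chainLengthOf

theorem chainDist_le_chainMetric (hε : 0 < ε) : chainDist ε p q ≤ chainMetric p q :=
  le_iSup₂ (f := fun ε (_ : 0 < ε) => chainDist ε p q) ε hε

theorem lowerSemicontinuous_chainDist (hε : 0 < ε) (p : X) :
    LowerSemicontinuous (chainDist ε p) := by
  intro x r hr
  filter_upwards [Metric.eball_mem_nhds x (lt_min hε (tsub_pos_of_lt hr))] with y hy
  by_contra! hyr
  have hxy : chainDist ε p x ≤ chainDist ε p y + edist y x :=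
    chainDistOf_le_add ((Metric.mem_eball.1 hy).le.trans (min_le_left _ _))
  have := hxy.trans_lt <| ENNReal.add_lt_add_of_le_of_lt (hyr.trans_lt hr).ne_top hyr
    ((Metric.mem_eball.1 hy).trans_le (min_le_right _ _))
  rw [add_tsub_cancel_of_le hr.le] at this
  exact this.false

theorem exists_chainDist_le_and_edist_add_le (hε : 0 < ε) (hx : chainDist ε p x ≤ r)
    (hs : s ≤ r) : ∃ z, chainDist ε p z ≤ s ∧ edist z x + s ≤ r + 2 * ε := by
  rcases eq_or_ne r ⊤ with rfl | hr
  · refine ⟨p, ?_, by simp⟩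
    refine (IsChainOf.chainDistOf_le (x := fun _ => p) (n := 0) ⟨rfl, rfl, by simp⟩).trans ?_
    simp [chainLengthOf_zero]
  obtain ⟨m, c, hc, hlen⟩ :=
    exists_isChainOf_of_chainDistOf_lt (hx.trans_lt (ENNReal.lt_add_right hr hε.ne'))
  set J := chainIndexAt edist c m s
  refine ⟨c J, (hc.take chainIndexAt_le).chainDistOf_le.trans chainLengthOf_chainIndexAt_le, ?_⟩
  rcases le_or_gt s (chainLengthOf edist c m) with hsm | hms
  · calc edist (c J) x + s ≤ edist (c J) x + (chainLengthOf edist c J + ε) :=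
          by gcongr; exact hc.le_chainLengthOf_chainIndexAt_add hsm
      _ = (edist (c J) (c m) + chainLengthOf edist c J) + ε := by rw [hc.2.1]; ring
      _ ≤ chainLengthOf edist c m + ε := by gcongr; exact edist_add_chainLengthOf_le chainIndexAt_le
      _ ≤ (r + ε) + ε := by gcongr
      _ = r + 2 * ε := by ring
  · rw [show J = m from chainIndexAt_of_le hms.le, hc.2.1, edist_self, zero_add]
    exact hs.trans le_self_add

end EdistChains

theorem forall_of_forall_lt_imp_exists_gt {α : Type*} [ConditionallyCompleteLinearOrder α]
    {P : α → Prop} (hanti : ∀ ⦃a b⦄, a ≤ b → P b → P a) (hne : ∃ a, P a)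
    (hstep : ∀ b, (∀ a < b, P a) → ∃ a > b, P a) (a : α) : P a := by
  by_contra ha
  have hbdd : BddAbove {b | P b} := ⟨a, fun b hb => not_lt.1 fun hab => ha (hanti hab.le hb)⟩
  obtain ⟨c, hc, hPc⟩ := hstep (sSup {b | P b}) fun b hb =>
    let ⟨_, hPc, hbc⟩ := exists_lt_of_lt_csSup hne hb
    hanti hbc.le hPc
  exact (le_csSup hbdd hPc).not_gt hc

theorem exists_antitone_pos_le_tendsto_zero (ε : ℕ → ℝ≥0∞) (hε : ∀ k, 0 < ε k) :
    ∃ ε' : ℕ → ℝ≥0∞, Antitone ε' ∧ (∀ k, 0 < ε' k ∧ ε' k ≤ ε k) ∧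
      Tendsto ε' atTop (nhds 0) := by
  obtain ⟨u, -, hu, hu0⟩ := exists_seq_strictAnti_tendsto' (zero_lt_one' ℝ≥0∞)
  have hle : ∀ k, (Finset.range (k + 1)).inf (fun i => min (ε i) (u i)) ≤ min (ε k) (u k) :=
    fun k => Finset.inf_le (Finset.self_mem_range_succ k)
  refine ⟨fun k => (Finset.range (k + 1)).inf fun i => min (ε i) (u i),
    fun j k hjk => Finset.inf_mono (Finset.range_subset_range.2 (by omega)),
    fun k => ⟨(Finset.lt_inf_iff ENNReal.zero_lt_top).2 fun i _ => lt_min (hε i) (hu i).1,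
      (hle k).trans (min_le_left _ _)⟩, ?_⟩
  exact tendsto_of_tendsto_of_tendsto_of_le_of_le tendsto_const_nhds hu0 (fun _ => zero_le)
    fun k => (hle k).trans (min_le_right _ _)

section TotallyBounded

variable [PseudoEMetricSpace X]

theorem totallyBounded_of_forall_exists_isCompact {s : Set X}
    (h : ∀ η > 0, ∃ K, IsCompact K ∧ ∀ x ∈ s, ∃ y ∈ K, edist x y < η) : TotallyBounded s := by
  refine EMetric.totallyBounded_iff.2 fun η hη => ?_
  obtain ⟨K, hK, hsK⟩ := h (η / 2) (ENNReal.half_pos hη.ne')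
  obtain ⟨t, ht, hKt⟩ := EMetric.totallyBounded_iff.1 hK.totallyBounded (η / 2)
    (ENNReal.half_pos hη.ne')
  refine ⟨t, ht, fun x hx => ?_⟩
  obtain ⟨y, hyK, hxy⟩ := hsK x hx
  obtain ⟨z, hzt, hyz⟩ := mem_iUnion₂.1 (hKt hyK)
  refine mem_iUnion₂.2 ⟨z, hzt, ?_⟩
  calc edist x z ≤ edist x y + edist y z := edist_triangle _ _ _
    _ < η / 2 + η / 2 := ENNReal.add_lt_add hxy hyz
    _ = η := ENNReal.add_halves η

theorem totallyBounded_iUnion_of_tail {C : ℕ → Set X} (hC : ∀ k, IsCompact (C k))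
    {u : ℕ → ℝ≥0∞} (hu : Tendsto u atTop (nhds 0))
    (htail : ∀ j k, j ≤ k → ∀ x ∈ C k, ∃ y ∈ C j, edist x y ≤ u j) :
    TotallyBounded (⋃ k, C k) := by
  refine totallyBounded_of_forall_exists_isCompact fun η hη => ?_
  obtain ⟨j, hj⟩ := (hu.eventually (gt_mem_nhds hη)).exists
  refine ⟨⋃ i ∈ Iic j, C i, (finite_Iic j).isCompact_biUnion fun i _ => hC i, fun x hx => ?_⟩
  obtain ⟨k, hk⟩ := mem_iUnion.1 hx
  rcases le_total k j with hkj | hjk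
  · exact ⟨x, mem_biUnion hkj hk, by simpa using hη⟩
  · obtain ⟨y, hy, hxy⟩ := htail j k hjk x hk
    exact ⟨y, mem_biUnion (mem_Iic.2 le_rfl) hy, hxy.trans_lt hj⟩

end TotallyBounded

section ChainBalls

variable [PseudoEMetricSpace X] {ε ε' r r' : ℝ≥0∞} {p : X}

def chainClosedBall (ε : ℝ≥0∞) (p : X) (r : ℝ≥0∞) : Set X := {x | chainDist ε p x ≤ r}

theorem chainClosedBall_mono (hε : ε ≤ ε') (hr : r ≤ r') :
    chainClosedBall ε p r ⊆ chainClosedBall ε' p r' :=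
  fun _ hx => (chainDistOf_anti hε).trans (hx.trans hr)

theorem isClosed_chainClosedBall (hε : 0 < ε) : IsClosed (chainClosedBall ε p r) :=
  (lowerSemicontinuous_chainDist hε p).isClosed_preimage r

theorem IsCompact.of_chainClosedBall (hK : IsCompact (chainClosedBall ε p r)) (hε' : 0 < ε')
    (hε : ε' ≤ ε) (hr : r' ≤ r) : IsCompact (chainClosedBall ε' p r') :=
  hK.of_isClosed_subset (isClosed_chainClosedBall hε') (chainClosedBall_mono hε hr)

/-- Truncating chains at radius `r` puts the larger ball inside a small thickening of `K`, which
lies in a compact neighbourhood of `K`. -/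
theorem IsCompact.exists_isCompact_chainClosedBall_add [WeaklyLocallyCompactSpace X] {K : Set X}
    (hK : IsCompact K) (p : X) :
    ∃ δ : ℝ, 0 < δ ∧ ∀ ε > 0, ∀ r : ℝ, chainClosedBall ε p (ENNReal.ofReal r) ⊆ K →
      ∃ ε' > 0, IsCompact (chainClosedBall ε' p (ENNReal.ofReal (r + δ))) := by
  obtain ⟨L, hL, hKL⟩ := exists_compact_superset hK
  obtain ⟨δ, hδ, hδL⟩ := hK.exists_cthickening_subset_open isOpen_interior hKL
  refine ⟨δ / 3, by positivity, fun ε hε r hBK => ?_⟩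
  set η := ENNReal.ofReal (δ / 3)
  have hε' : 0 < min ε η := lt_min hε (ENNReal.ofReal_pos.2 (by positivity))
  refine ⟨min ε η, hε', hL.of_isClosed_subset (isClosed_chainClosedBall hε') fun x hx => ?_⟩
  obtain ⟨z, hz, hzx⟩ := exists_chainDist_le_and_edist_add_le hε'
    (hx.trans ENNReal.ofReal_add_le) (le_self_add : ENNReal.ofReal r ≤ _ + η)
  have hzK : z ∈ K := hBK ((chainDistOf_anti (min_le_left _ _)).trans hz)
  have hxz : edist x z ≤ ENNReal.ofReal δ := by
    rw [edist_comm]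
    refine (ENNReal.add_le_add_iff_right (ENNReal.ofReal_ne_top (r := r))).1 ?_
    calc edist z x + ENNReal.ofReal r ≤ ENNReal.ofReal r + η + 2 * min ε η := hzx
      _ ≤ ENNReal.ofReal r + η + 2 * η := by gcongr; exact min_le_right _ _
      _ = ENNReal.ofReal (δ / 3 + 2 * (δ / 3)) + ENNReal.ofReal r := by
        rw [ENNReal.ofReal_add (by positivity) (by positivity),
          ENNReal.ofReal_mul zero_le_two, ENNReal.ofReal_ofNat]
        ring
      _ = ENNReal.ofReal δ + ENNReal.ofReal r := by ring_nf
  exact interior_subset (hδL (Metric.mem_cthickening_of_edist_le x z δ K hzK hxz))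

end ChainBalls

section Compactness

variable [PseudoEMetricSpace X] [CompleteSpace X] [WeaklyLocallyCompactSpace X]

/-- The balls of radii `R - 1 / (k + 1)`, for decreasing `ε`, have a totally bounded union, and
its compact closure can be fattened past radius `R`. -/
theorem exists_gt_isCompact_chainClosedBall (p : X) {R : ℝ}
    (h : ∀ r < R, ∃ ε > 0, IsCompact (chainClosedBall ε p (ENNReal.ofReal r))) :
    ∃ r > R, ∃ ε > 0, IsCompact (chainClosedBall ε p (ENNReal.ofReal r)) := by
  set r : ℕ → ℝ := fun k => R - 1 / (k + 1)
  have hr_lt : ∀ k, r k < R := fun k => sub_lt_self R Nat.one_div_pos_of_nat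
  have hr_mono : Monotone r := fun j k hjk => sub_le_sub_left (by gcongr) R
  have hR : ∀ k, R = r k + 1 / (k + 1) := fun k => (sub_add_cancel R _).symm
  choose ε₀ hε₀ hK₀ using fun k => h (r k) (hr_lt k)
  obtain ⟨ε, hε_anti, hε, hε_lim⟩ := exists_antitone_pos_le_tendsto_zero ε₀ hε₀
  set C : ℕ → Set X := fun k => chainClosedBall (ε k) p (ENNReal.ofReal (r k))
  have hC : ∀ k, IsCompact (C k) := fun k => (hK₀ k).of_chainClosedBall (hε k).1 (hε k).2 le_rfl
  have htail : ∀ j k, j ≤ k → ∀ x ∈ C k, ∃ y ∈ C j,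
      edist x y ≤ ENNReal.ofReal (1 / (j + 1)) + 2 * ε j := by
    intro j k hjk x hx
    obtain ⟨z, hz, hzx⟩ := exists_chainDist_le_and_edist_add_le (hε k).1 hx
      (ENNReal.ofReal_le_ofReal (hr_mono hjk))
    refine ⟨z, (chainDistOf_anti (hε_anti hjk)).trans hz, ?_⟩
    rw [edist_comm]
    refine (ENNReal.add_le_add_iff_right (ENNReal.ofReal_ne_top (r := r j))).1 ?_
    calc edist z x + ENNReal.ofReal (r j) ≤ ENNReal.ofReal (r k) + 2 * ε k := hzx
      _ ≤ ENNReal.ofReal (r j) + ENNReal.ofReal (1 / (j + 1)) + 2 * ε j := by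
        gcongr
        · exact (ENNReal.ofReal_le_ofReal ((hr_lt k).le.trans_eq (hR j))).trans
            ENNReal.ofReal_add_le
        · exact hε_anti hjk
      _ = _ := by ring
  have hu : Tendsto (fun j : ℕ => ENNReal.ofReal (1 / (j + 1)) + 2 * ε j) atTop (nhds 0) := by
    have h₁ := ENNReal.tendsto_ofReal (tendsto_one_div_add_atTop_nhds_zero_nat (𝕜 := ℝ))
    simpa using h₁.add (ENNReal.Tendsto.const_mul hε_lim (Or.inr ENNReal.ofNat_ne_top))
  have hU : IsCompact (closure (⋃ k, C k)) :=
    (totallyBounded_iUnion_of_tail hC hu htail).closure.isCompact_of_isClosed isClosed_closure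
  obtain ⟨δ, hδ, hstep⟩ := hU.exists_isCompact_chainClosedBall_add p
  obtain ⟨k, hk⟩ := exists_nat_one_div_lt hδ
  obtain ⟨ε', hε', hcpt⟩ := hstep (ε k) (hε k).1 (r k)
    ((subset_iUnion C k).trans subset_closure)
  exact ⟨r k + δ, (hR k).trans_lt (by gcongr), ε', hε', hcpt⟩

end Compactness

theorem exists_isCompact_chainClosedBall [EMetricSpace X] [CompleteSpace X]
    [WeaklyLocallyCompactSpace X] (p : X) {r : ℝ≥0∞} (hr : r ≠ ⊤) :
    ∃ ε > 0, IsCompact (chainClosedBall ε p r) := by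
  have hzero : IsCompact (chainClosedBall 1 p (ENNReal.ofReal 0)) := by
    refine (isCompact_singleton (x := p)).of_isClosed_subset (isClosed_chainClosedBall one_pos)
      fun x hx => ?_
    have hpx : edist p x ≤ 0 := by simpa using edist_le_chainDist.trans hx
    exact (edist_le_zero.1 hpx).symm
  simpa [ENNReal.ofReal_toReal hr] using
    forall_of_forall_lt_imp_exists_gt
      (P := fun R : ℝ => ∃ ε > 0, IsCompact (chainClosedBall ε p (ENNReal.ofReal R)))
      (fun a b hab ⟨ε, hε, hK⟩ =>
        ⟨ε, hε, hK.of_chainClosedBall hε le_rfl (ENNReal.ofReal_le_ofReal hab)⟩)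
      ⟨0, 1, one_pos, hzero⟩ (fun _ => exists_gt_isCompact_chainClosedBall p) r.toReal

section ChainPath

variable [PseudoEMetricSpace X] {ε : ℝ≥0∞} {p q : X} {c : ℕ → X} {n : ℕ}

/-- The chain traversed at constant speed: at time `t` it sits at the last vertex reached
within the fraction `t` of the total length. -/
noncomputable def chainPath (c : ℕ → X) (n : ℕ) (t : ℝ) : X :=
  c (chainIndexAt edist c n (ENNReal.ofReal t * chainLengthOf edist c n))

theorem IsChainOf.chainPath_one (h : IsChainOf edist ε p q c n) : chainPath c n 1 = q := by
  rw [chainPath, ENNReal.ofReal_one, one_mul, chainIndexAt_of_le le_rfl, h.2.1]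

theorem IsChainOf.chainDist_chainPath_le (h : IsChainOf edist ε p q c n) (t : ℝ) :
    chainDist ε p (chainPath c n t) ≤ chainLengthOf edist c n :=
  (h.take chainIndexAt_le).chainDistOf_le.trans (chainLengthOf_mono chainIndexAt_le)

theorem IsChainOf.edist_chainPath_le_of_le (h : IsChainOf edist ε p q c n)
    (hL : chainLengthOf edist c n ≠ ⊤) {s t : ℝ} (hst : s ≤ t) (ht : t ≤ 1) :
    edist (chainPath c n s) (chainPath c n t) ≤
      ENNReal.ofReal (t - s) * chainLengthOf edist c n + ε := by
  set L := chainLengthOf edist c n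
  set Js := chainIndexAt edist c n (ENNReal.ofReal s * L)
  set Jt := chainIndexAt edist c n (ENNReal.ofReal t * L)
  have hJ : Js ≤ Jt := chainIndexAt_mono (by gcongr)
  have hsL : ENNReal.ofReal s * L ≤ L :=
    mul_le_of_le_one_left' (ENNReal.ofReal_le_one.2 (hst.trans ht))
  have hJs_top : chainLengthOf edist c Js ≠ ⊤ :=
    ne_top_of_le_ne_top hL (chainLengthOf_mono chainIndexAt_le)
  refine (ENNReal.add_le_add_iff_right hJs_top).1 ?_
  calc edist (c Js) (c Jt) + chainLengthOf edist c Js ≤ chainLengthOf edist c Jt :=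
        edist_add_chainLengthOf_le hJ
    _ ≤ ENNReal.ofReal t * L := chainLengthOf_chainIndexAt_le
    _ ≤ (ENNReal.ofReal s + ENNReal.ofReal (t - s)) * L := by
        gcongr
        simpa using ENNReal.ofReal_add_le (p := s) (q := t - s)
    _ ≤ (chainLengthOf edist c Js + ε) + ENNReal.ofReal (t - s) * L := by
        rw [add_mul]
        gcongr
        exact h.le_chainLengthOf_chainIndexAt_add hsL
    _ = ENNReal.ofReal (t - s) * L + ε + chainLengthOf edist c Js := by ring

theorem IsChainOf.edist_chainPath_le (h : IsChainOf edist ε p q c n)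
    (hL : chainLengthOf edist c n ≠ ⊤) {s t : ℝ} (hs : s ∈ Icc (0 : ℝ) 1)
    (ht : t ∈ Icc (0 : ℝ) 1) :
    edist (chainPath c n s) (chainPath c n t) ≤ chainLengthOf edist c n * edist s t + ε := by
  rw [edist_dist, Real.dist_eq, mul_comm]
  rcases le_total s t with hst | hts
  · simpa [abs_sub_comm s t, abs_of_nonneg (sub_nonneg.2 hst)] using
      h.edist_chainPath_le_of_le hL hst ht.2
  · simpa [edist_comm, abs_of_nonneg (sub_nonneg.2 hts)] using
      h.edist_chainPath_le_of_le hL hts hs.2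

end ChainPath

theorem IsChainOf.chainPath_zero [EMetricSpace X] {ε : ℝ≥0∞} {p q : X} {c : ℕ → X} {n : ℕ}
    (h : IsChainOf edist ε p q c n) : chainPath c n 0 = p := by
  rw [chainPath, ENNReal.ofReal_zero, zero_mul]
  have hJ := (edist_add_chainLengthOf_le (c := c) (chainIndexAt edist c n 0).zero_le).trans
    chainLengthOf_chainIndexAt_le
  rw [← h.1]
  exact (edist_le_zero.1 (le_of_add_le_left hJ)).symm

theorem IsCompact.exists_ultrafilter_tendsto {α β : Type*} [TopologicalSpace β] {K : Set β}
    (hK : IsCompact K) {f : ℕ → α → β} (hf : ∀ n a, f n a ∈ K) :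
    ∃ (U : Ultrafilter ℕ) (γ : α → β),
      (U : Filter ℕ) ≤ atTop ∧ ∀ a, Tendsto (f · a) (U : Filter ℕ) (nhds (γ a)) := by
  have hlim : ∀ a, ∃ b ∈ K, ↑((Ultrafilter.of atTop).map (f · a)) ≤ nhds b := fun a =>
    hK.ultrafilter_le_nhds _ <| by
      rw [Ultrafilter.coe_map, le_principal_iff]
      exact mem_map.2 (univ_mem' fun n => hf n a)
  choose γ _ hγ using hlim
  exact ⟨Ultrafilter.of atTop, γ, Ultrafilter.of_le _, hγ⟩

theorem lipschitzOnWith_of_tendsto {ι α β : Type*} [PseudoMetricSpace α] [PseudoEMetricSpace β]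
    {l : Filter ι} [l.NeBot] {f : ι → α → β} {γ : α → β} {s : Set α} {D : ℝ≥0∞} (hD : D ≠ ⊤)
    {u : ι → ℝ≥0∞} (hu : Tendsto u l (nhds 0)) (hγ : ∀ a ∈ s, Tendsto (f · a) l (nhds (γ a)))
    (hf : ∀ i, ∀ a ∈ s, ∀ b ∈ s, edist (f i a) (f i b) ≤ (D + u i) * edist a b + u i) :
    LipschitzOnWith D.toNNReal γ s := by
  intro a ha b hb
  rw [ENNReal.coe_toNNReal hD]
  have hbound : Tendsto (fun i => (D + u i) * edist a b + u i) l (nhds (D * edist a b)) := by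
    have hDu : Tendsto (fun i => D + u i) l (nhds D) := by simpa using tendsto_const_nhds.add hu
    simpa using (ENNReal.Tendsto.mul_const hDu (Or.inr (edist_ne_top a b))).add hu
  exact le_of_tendsto_of_tendsto' ((hγ a ha).edist (hγ b hb)) hbound fun i => hf i a ha b hb

theorem exists_lipschitzOnWith_chainMetric [EMetricSpace X] [CompleteSpace X]
    [WeaklyLocallyCompactSpace X] {p q : X} (hD : chainMetric p q ≠ ⊤) :
    ∃ γ : ℝ → X, γ 0 = p ∧ γ 1 = q ∧ LipschitzOnWith (chainMetric p q).toNNReal γ (Icc 0 1) := by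
  set D := chainMetric p q
  obtain ⟨ε₀, hε₀, hK⟩ := exists_isCompact_chainClosedBall p (r := D + 1) (by finiteness)
  obtain ⟨ε, -, hε, hε_lim⟩ := exists_seq_strictAnti_tendsto' (lt_min hε₀ one_pos)
  have hchain : ∀ n, ∃ m c, IsChainOf edist (ε n) p q c m ∧ chainLengthOf edist c m < D + ε n :=
    fun n => exists_isChainOf_of_chainDistOf_lt <|
      (chainDist_le_chainMetric (hε n).1).trans_lt (ENNReal.lt_add_right hD (hε n).1.ne')
  choose m c hc hlen using hchain
  have hmem : ∀ n t, chainPath (c n) (m n) t ∈ chainClosedBall ε₀ p (D + 1) := fun n t =>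
    calc chainDist ε₀ p _ ≤ chainDist (ε n) p (chainPath (c n) (m n) t) :=
          chainDistOf_anti ((hε n).2.le.trans (min_le_left _ _))
      _ ≤ chainLengthOf edist (c n) (m n) := (hc n).chainDist_chainPath_le t
      _ ≤ D + 1 := (hlen n).le.trans (by gcongr; exact (hε n).2.le.trans (min_le_right _ _))
  obtain ⟨U, γ, hU, hγ⟩ := hK.exists_ultrafilter_tendsto hmem
  refine ⟨γ, ?_, ?_, lipschitzOnWith_of_tendsto hD (hε_lim.mono_left hU) (fun t _ => hγ t)
    fun n s hs t ht => ((hc n).edist_chainPath_le (hlen n).ne_top hs ht).trans ?_⟩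
  · exact tendsto_nhds_unique (hγ 0) (by simp only [(hc _).chainPath_zero, tendsto_const_nhds])
  · exact tendsto_nhds_unique (hγ 1) (by simp only [(hc _).chainPath_one, tendsto_const_nhds])
  · gcongr
    exact (hlen n).le

theorem sum_le_pathLengthOf {ρ : X → X → ℝ≥0∞} {γ : ℝ → X} {n : ℕ} {t : ℕ → ℝ} (h0 : t 0 = 0)
    (hn : t n = 1) (ht : Monotone t) :
    ∑ k ∈ Finset.range n, ρ (γ (t k)) (γ (t (k + 1))) ≤ pathLengthOf ρ γ :=
  le_iSup₂_of_le (f := fun n t => ⨆ (_ : t 0 = 0 ∧ t n = 1 ∧ Monotone t),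
    ∑ k ∈ Finset.range n, ρ (γ (t k)) (γ (t (k + 1)))) n t (le_iSup_of_le ⟨h0, hn, ht⟩ le_rfl)

section PathLength

variable [PseudoEMetricSpace X] {ε : ℝ≥0∞} {p q : X} {γ : ℝ → X}

theorem continuousWrt_edist_iff : ContinuousWrt edist γ ↔ ContinuousOn γ (Icc 0 1) := by
  simp only [ContinuousWrt, ContinuousOn, ContinuousWithinAt, tendsto_iff_edist_tendsto_0]

theorem pathLength_le_of_lipschitzOnWith {K : NNReal} (hγ : LipschitzOnWith K γ (Icc 0 1)) :
    pathLength γ ≤ K := by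
  refine iSup_le fun n => iSup_le fun t => iSup_le fun ⟨h0, hn, ht⟩ => ?_
  have hmem : ∀ k ≤ n, t k ∈ Icc (0 : ℝ) 1 := fun k hk => ⟨h0 ▸ ht k.zero_le, hn ▸ ht hk⟩
  have hstep : ∀ k, 0 ≤ t (k + 1) - t k := fun k => sub_nonneg.2 (ht k.le_succ)
  calc ∑ k ∈ Finset.range n, edist (γ (t k)) (γ (t (k + 1)))
      ≤ ∑ k ∈ Finset.range n, K * ENNReal.ofReal (t (k + 1) - t k) := by
        refine Finset.sum_le_sum fun k hk => ?_
        have hk := Finset.mem_range.1 hk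
        have := hγ (hmem k hk.le) (hmem (k + 1) hk)
        rwa [edist_dist, Real.dist_eq, abs_sub_comm, abs_of_nonneg (hstep k)] at this
    _ = K * ENNReal.ofReal (∑ k ∈ Finset.range n, (t (k + 1) - t k)) := by
        rw [ENNReal.ofReal_sum_of_nonneg fun k _ => hstep k, Finset.mul_sum]
    _ = K := by rw [Finset.sum_range_sub, h0, hn]; simp

theorem exists_isChainOf_of_continuousOn (hγ : ContinuousOn γ (Icc 0 1)) (hε : 0 < ε) :
    ∃ n : ℕ, 0 < n ∧ IsChainOf edist ε (γ 0) (γ 1) (fun k => γ (k / n)) n := by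
  obtain ⟨δ, hδ, hγδ⟩ :=
    EMetric.uniformContinuousOn_iff.1 (isCompact_Icc.uniformContinuousOn_of_continuous hγ) ε hε
  obtain ⟨n, hn⟩ := ENNReal.exists_inv_nat_lt hδ.ne'
  have hn0 : 0 < n := Nat.pos_of_ne_zero fun h => by simp [h] at hn
  have hnR : (0 : ℝ) < n := Nat.cast_pos.2 hn0
  have hmem : ∀ k ≤ n, (k : ℝ) / n ∈ Icc (0 : ℝ) 1 := fun k hk =>
    ⟨by positivity, div_le_one_of_le₀ (Nat.cast_le.2 hk) hnR.le⟩
  refine ⟨n, hn0, by simp, by simp [hnR.ne'], fun k hk => (hγδ (hmem k hk.le) (hmem _ hk) ?_).le⟩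
  rw [edist_dist, Real.dist_eq, Nat.cast_succ, ← sub_div, sub_add_cancel_left, abs_div, abs_neg,
    abs_one, abs_of_pos hnR, one_div, ENNReal.ofReal_inv_of_pos hnR, ENNReal.ofReal_natCast]
  exact hn

theorem chainMetric_le_pathLength (hγ : ContinuousOn γ (Icc 0 1)) :
    chainMetric (γ 0) (γ 1) ≤ pathLength γ := by
  refine iSup₂_le fun ε hε => ?_
  obtain ⟨n, hn, hc⟩ := exists_isChainOf_of_continuousOn hγ hε
  refine hc.chainDistOf_le.trans (sum_le_pathLengthOf (t := fun k => (k : ℝ) / n) (by simp)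
    (div_self (Nat.cast_pos.2 hn).ne') fun a b hab => ?_)
  dsimp only
  gcongr

theorem chainMetric_le_lengthMetric : chainMetric p q ≤ lengthMetric p q :=
  le_iInf₂ fun _ ⟨hγ, h0, h1⟩ =>
    h0 ▸ h1 ▸ chainMetric_le_pathLength (continuousWrt_edist_iff.1 hγ)

theorem lengthMetric_le_pathLength (hγ : ContinuousOn γ (Icc 0 1)) (h0 : γ 0 = p)
    (h1 : γ 1 = q) :
    lengthMetric p q ≤ pathLength γ :=
  iInf₂_le γ ⟨continuousWrt_edist_iff.2 hγ, h0, h1⟩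

end PathLength

theorem exists_lipschitzOnWith_pathLength_eq_chainMetric [EMetricSpace X] [CompleteSpace X]
    [WeaklyLocallyCompactSpace X] {p q : X} (hD : chainMetric p q ≠ ⊤) :
    ∃ γ : ℝ → X, γ 0 = p ∧ γ 1 = q ∧ LipschitzOnWith (chainMetric p q).toNNReal γ (Icc 0 1) ∧
      pathLength γ = chainMetric p q := by
  obtain ⟨γ, h0, h1, hγ⟩ := exists_lipschitzOnWith_chainMetric hD
  refine ⟨γ, h0, h1, hγ, le_antisymm ?_ (h0 ▸ h1 ▸ chainMetric_le_pathLength hγ.continuousOn)⟩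
  exact (pathLength_le_of_lipschitzOnWith hγ).trans_eq (ENNReal.coe_toNNReal hD)

/-- if `(X,d)` is complete and locally compact, then `d_0 = d̄`; moreover
`(X,d_0)` is a geodesic space: for all `p, q` with `d_0(p,q) < ∞` there is a path `γ`
from `p` to `q` with `d(γ t, γ t') ≤ d_0(p,q)·|t − t'|` and `L(γ) = d_0(p,q)`. -/
theorem chainMetric_eq_lengthMetric_of_complete_locallyCompact {X : Type*} [MetricSpace X]
    [CompleteSpace X] [LocallyCompactSpace X] :
    (∀ p q : X, chainMetric p q = lengthMetric p q) ∧
    ∀ p q : X, chainMetric p q ≠ ⊤ →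
      ∃ γ : ℝ → X, γ 0 = p ∧ γ 1 = q ∧ ContinuousOn γ (Icc (0 : ℝ) 1) ∧
        (∀ t ∈ Icc (0 : ℝ) 1, ∀ t' ∈ Icc (0 : ℝ) 1,
          edist (γ t) (γ t') ≤ chainMetric p q * ENNReal.ofReal |t - t'|) ∧
        pathLength γ = chainMetric p q := by
  refine ⟨fun p q => le_antisymm chainMetric_le_lengthMetric ?_, fun p q hD => ?_⟩
  · rcases eq_or_ne (chainMetric p q) ⊤ with hD | hD
    · exact hD ▸ le_top
    · obtain ⟨γ, h0, h1, hγ, hlen⟩ := exists_lipschitzOnWith_pathLength_eq_chainMetric hD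
      exact (lengthMetric_le_pathLength hγ.continuousOn h0 h1).trans hlen.le
  · obtain ⟨γ, h0, h1, hγ, hlen⟩ := exists_lipschitzOnWith_pathLength_eq_chainMetric hD
    refine ⟨γ, h0, h1, hγ.continuousOn, fun t ht t' ht' => ?_, hlen⟩
    simpa [ENNReal.coe_toNNReal hD, edist_dist, Real.dist_eq] using hγ ht ht'
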